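/- Let α, β : ℝ² → ℝ³ be smooth maps satisfying α_v − β_u = 2α × β and α_u + β_v = (2/√3) α × β. Define α̃ = −(1/2)α + (√3/2)β and β̃ = −(√3/2)α − (1/2)β. Then α̃_v = β̃_u and α̃_u + β̃_v = −(4/√3) α̃ × β̃; consequently any ε : ℝ² → ℝ³ with ε_u = α̃, ε_v = β̃ satisfies the Wente H-surface equation ε_{uu} + ε_{vv} = −(4/√3) ε_u × ε_v. -/

import Mathlib

noncomputable section

/-- The frame rotated through angle `2π/3`: `α̃ = −(1/2)α + (√3/2)β`. -/
def ta (α β : ℝ → ℝ → Fin 3 → ℝ) (u v : ℝ) : Fin 3 → ℝ :=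
  (-(1 / 2) : ℝ) • α u v + (Real.sqrt 3 / 2) • β u v

/-- The frame rotated through angle `2π/3`: `β̃ = −(√3/2)α − (1/2)β`. -/
def tb (α β : ℝ → ℝ → Fin 3 → ℝ) (u v : ℝ) : Fin 3 → ℝ :=
  (-(Real.sqrt 3 / 2)) • α u v - ((1 / 2) : ℝ) • β u v

/-! The pair `(α̃, β̃)` is `(α, β)` rotated through `2π/3` with constant coefficients, so
its partial derivatives are the same rotation of those of `(α, β)`, and a rotation preserves
the cross product: `α̃ × β̃ = α × β`. Both identities are then linear combinations of the two
structure equations, and for `ε` with `ε_u = α̃`, `ε_v = β̃` the Wente equation is the second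
identity. -/

theorem cross_rotate {R : Type*} [CommRing R] (a b : Fin 3 → R) (c s : R) :
    crossProduct (c • a + s • b) ((-s) • a + c • b) =
      (c ^ 2 + s ^ 2) • crossProduct a b := by
  simp only [map_add, map_smul, LinearMap.add_apply, LinearMap.smul_apply, cross_self,
    smul_zero, ← cross_anticomm a b]
  module

theorem cross_ta_tb (α β : ℝ → ℝ → Fin 3 → ℝ) (u v : ℝ) :
    crossProduct (ta α β u v) (tb α β u v) = crossProduct (α u v) (β u v) := by
  have hrot : tb α β u v = (-(Real.sqrt 3 / 2)) • α u v + (-(1 / 2) : ℝ) • β u v := by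
    rw [tb, neg_smul (1 / 2 : ℝ), ← sub_eq_add_neg]
  rw [ta, hrot, cross_rotate, div_pow, Real.sq_sqrt (by norm_num)]
  norm_num

section
variable {α β αu αv βu βv : ℝ → ℝ → Fin 3 → ℝ} {u v : ℝ}

theorem hasDerivAt_ta_u (hα : HasDerivAt (fun u' => α u' v) (αu u v) u)
    (hβ : HasDerivAt (fun u' => β u' v) (βu u v) u) :
    HasDerivAt (fun u' => ta α β u' v) (ta αu βu u v) u :=
  (hα.const_smul (-(1 / 2) : ℝ)).add (hβ.const_smul (Real.sqrt 3 / 2))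

theorem hasDerivAt_ta_v (hα : HasDerivAt (fun v' => α u v') (αv u v) v)
    (hβ : HasDerivAt (fun v' => β u v') (βv u v) v) :
    HasDerivAt (fun v' => ta α β u v') (ta αv βv u v) v :=
  (hα.const_smul (-(1 / 2) : ℝ)).add (hβ.const_smul (Real.sqrt 3 / 2))

theorem hasDerivAt_tb_u (hα : HasDerivAt (fun u' => α u' v) (αu u v) u)
    (hβ : HasDerivAt (fun u' => β u' v) (βu u v) u) :
    HasDerivAt (fun u' => tb α β u' v) (tb αu βu u v) u :=
  (hα.const_smul (-(Real.sqrt 3 / 2))).sub (hβ.const_smul (1 / 2 : ℝ))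

theorem hasDerivAt_tb_v (hα : HasDerivAt (fun v' => α u v') (αv u v) v)
    (hβ : HasDerivAt (fun v' => β u v') (βv u v) v) :
    HasDerivAt (fun v' => tb α β u v') (tb αv βv u v) v :=
  (hα.const_smul (-(Real.sqrt 3 / 2))).sub (hβ.const_smul (1 / 2 : ℝ))

theorem ta_v_eq_tb_u (heq1 : αv u v - βu u v = (2 : ℝ) • crossProduct (α u v) (β u v))
    (heq2 : αu u v + βv u v = (2 / Real.sqrt 3) • crossProduct (α u v) (β u v)) :
    ta αv βv u v = tb αu βu u v := by
  have hs : Real.sqrt 3 ≠ 0 := by positivity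
  rw [← sub_eq_zero]
  calc ta αv βv u v - tb αu βu u v
      = (-(1 / 2) : ℝ) • (αv u v - βu u v) + (Real.sqrt 3 / 2) • (αu u v + βv u v) := by
        rw [ta, tb]; module
    _ = 0 := by
        rw [heq1, heq2, smul_smul, smul_smul, ← add_smul]
        field_simp
        simp

theorem ta_u_add_tb_v (heq1 : αv u v - βu u v = (2 : ℝ) • crossProduct (α u v) (β u v))
    (heq2 : αu u v + βv u v = (2 / Real.sqrt 3) • crossProduct (α u v) (β u v)) :
    ta αu βu u v + tb αv βv u v = (-(4 / Real.sqrt 3)) • crossProduct (α u v) (β u v) := by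
  have hs : Real.sqrt 3 ≠ 0 := by positivity
  calc ta αu βu u v + tb αv βv u v
      = (-(1 / 2) : ℝ) • (αu u v + βv u v) - (Real.sqrt 3 / 2) • (αv u v - βu u v) := by
        rw [ta, tb]; module
    _ = _ := by
        rw [heq1, heq2, smul_smul, smul_smul, ← sub_smul]
        congr 1
        field_simp
        norm_num
end

/-- if `α, β : ℝ² → ℝ³` satisfy `α_v − β_u = 2 α × β` and
`α_u + β_v = (2/√3) α × β`, then `α̃ = −(1/2)α + (√3/2)β`,
`β̃ = −(√3/2)α − (1/2)β` satisfy `α̃_v = β̃_u` and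
`α̃_u + β̃_v = −(4/√3) α̃ × β̃`; consequently any `ε` with `ε_u = α̃`,
`ε_v = β̃` satisfies the Wente `H`-surface equation
`ε_{uu} + ε_{vv} = −(4/√3) ε_u × ε_v`. -/
theorem stmt_19 (α β αu αv βu βv : ℝ → ℝ → Fin 3 → ℝ)
    (hαu : ∀ u v, HasDerivAt (fun u' => α u' v) (αu u v) u)
    (hαv : ∀ u v, HasDerivAt (fun v' => α u v') (αv u v) v)
    (hβu : ∀ u v, HasDerivAt (fun u' => β u' v) (βu u v) u)
    (hβv : ∀ u v, HasDerivAt (fun v' => β u v') (βv u v) v)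
    (heq1 : ∀ u v, αv u v - βu u v = (2 : ℝ) • crossProduct (α u v) (β u v))
    (heq2 : ∀ u v,
      αu u v + βv u v = (2 / Real.sqrt 3) • crossProduct (α u v) (β u v)) :
    (∀ u v, deriv (fun v' => ta α β u v') v = deriv (fun u' => tb α β u' v) u) ∧
    (∀ u v,
      deriv (fun u' => ta α β u' v) u + deriv (fun v' => tb α β u v') v
        = (-(4 / Real.sqrt 3)) • crossProduct (ta α β u v) (tb α β u v)) ∧
    (∀ ε : ℝ → ℝ → Fin 3 → ℝ,
      (∀ u v, HasDerivAt (fun u' => ε u' v) (ta α β u v) u) →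
      (∀ u v, HasDerivAt (fun v' => ε u v') (tb α β u v) v) →
      ∀ u v,
        deriv (fun u' => deriv (fun u'' => ε u'' v) u') u
          + deriv (fun v' => deriv (fun v'' => ε u v'') v') v
          = (-(4 / Real.sqrt 3)) •
              crossProduct
                (deriv (fun u' => ε u' v) u) (deriv (fun v' => ε u v') v)) := by
  have hdiv : ∀ u v, deriv (fun u' => ta α β u' v) u + deriv (fun v' => tb α β u v') v
      = (-(4 / Real.sqrt 3)) • crossProduct (ta α β u v) (tb α β u v) := fun u v => by
    rw [(hasDerivAt_ta_u (hαu u v) (hβu u v)).deriv,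
      (hasDerivAt_tb_v (hαv u v) (hβv u v)).deriv, cross_ta_tb]
    exact ta_u_add_tb_v (heq1 u v) (heq2 u v)
  refine ⟨fun u v => ?_, hdiv, fun ε hεu hεv u v => ?_⟩
  · rw [(hasDerivAt_ta_v (hαv u v) (hβv u v)).deriv,
      (hasDerivAt_tb_u (hαu u v) (hβu u v)).deriv]
    exact ta_v_eq_tb_u (heq1 u v) (heq2 u v)
  · have hεuu : (fun u' => deriv (fun u'' => ε u'' v) u') = fun u' => ta α β u' v :=
      funext fun u' => (hεu u' v).deriv
    have hεvv : (fun v' => deriv (fun v'' => ε u v'') v') = fun v' => tb α β u v' :=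
      funext fun v' => (hεv u v').deriv
    rw [hεuu, hεvv, (hεu u v).deriv, (hεv u v).deriv]
    exact hdiv u v
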